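/- arXiv:1608.04002 — 2 statements merged into one kernel-verified Lean document; each statement's English description precedes it below -/
import Mathlib

section
/- A cross-layer network mapping is SRLG-survivable if and only if for every SRLG r ∈ R_E and every cutset χ of the logical graph, |χ ∩ (⋃_{(i,j)∈r} Λ(i,j))| ≤ |χ| − 1. -/
open SimpleGraph

private lemma delMono {V : Type*} (G : SimpleGraph V) {s t : Set (Sym2 V)}
    (h : s ⊆ t) : G.deleteEdges t ≤ G.deleteEdges s := by
  intro v w hvw
  simp only [deleteEdges_adj] at *
  exact ⟨hvw.1, fun hm => hvw.2 (h hm)⟩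

private lemma delInter {V : Type*} (G : SimpleGraph V) (s : Set (Sym2 V)) :
    G.deleteEdges (s ∩ G.edgeSet) = G.deleteEdges s := by
  ext v w
  simp only [deleteEdges_adj, Set.mem_inter_iff, mem_edgeSet]
  tauto

def IsCutset {V : Type*} (G : SimpleGraph V) (χ : Set (Sym2 V)) : Prop :=
  χ ⊆ G.edgeSet ∧ ¬ (G.deleteEdges χ).Connected ∧
    ∀ χ' ⊂ χ, (G.deleteEdges χ').Connected

private lemma cutset_nonempty {V : Type*} {G : SimpleGraph V} {χ : Set (Sym2 V)}
    (hG : G.Connected) (h : IsCutset G χ) : χ.Nonempty := by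
  rcases Set.eq_empty_or_nonempty χ with h0 | h0
  · exfalso; apply h.2.1; rw [h0, deleteEdges_empty]; exact hG
  · exact h0

/-- SRLG-survivability iff no cutset of the logical graph is fully
routed through any SRLG. -/
theorem srlg_survivable_iff_cutsets
    {VS P : Type*} [Fintype VS] (G : SimpleGraph VS) (hG : G.Connected)
    (Λ : P → Set (Sym2 VS)) (R : Set (Set P)) (hR : R.Finite) :
    (∀ r ∈ R, (G.deleteEdges (⋃ e ∈ r, Λ e)).Connected) ↔
      (∀ r ∈ R, ∀ χ : Set (Sym2 VS), IsCutset G χ →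
        (χ ∩ ⋃ e ∈ r, Λ e).ncard ≤ χ.ncard - 1) := by
  classical
  constructor
  · intro hsurv r hr χ hχ
    set U := ⋃ e ∈ r, Λ e with hU
    have hχfin : χ.Finite := Set.toFinite χ
    have hne : χ.Nonempty := cutset_nonempty hG hχ
    -- χ is not contained in U
    have hnsub : ¬ χ ⊆ U := by
      intro hsub
      exact hχ.2.1 ((hsurv r hr).mono (delMono G hsub))
    have hss : χ ∩ U ⊂ χ := by
      constructor
      · exact Set.inter_subset_left
      · intro hle
        exact hnsub fun x hx => (hle hx).2
    have hlt := Set.ncard_lt_ncard hss hχfin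
    have h1 : 1 ≤ χ.ncard := (Set.ncard_pos hχfin).mpr hne
    omega
  · intro hcut r hr
    by_contra hnc
    set U := ⋃ e ∈ r, Λ e with hU
    set B := U ∩ G.edgeSet with hB
    have hBfin : B.Finite := Set.toFinite B
    -- family of disconnecting subsets of B
    set F : Set (Set (Sym2 VS)) := {χ | χ ⊆ B ∧ ¬ (G.deleteEdges χ).Connected} with hF
    have hBF : B ∈ F := by
      refine ⟨le_refl _, ?_⟩
      rw [hB, delInter]
      exact hnc
    have hFfin : F.Finite := (hBfin.finite_subsets).subset fun χ hχ => hχ.1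
    obtain ⟨χ, hχF, hmin⟩ := hFfin.exists_minimal ⟨B, hBF⟩
    have hcutset : IsCutset G χ := by
      refine ⟨hχF.1.trans Set.inter_subset_right, hχF.2, ?_⟩
      intro χ' hχ'
      by_contra hχ'nc
      have hχ'F : χ' ∈ F := ⟨hχ'.1.trans hχF.1, hχ'nc⟩
      have := hmin hχ'F hχ'.1
      exact hχ'.2 this
    have hsubU : χ ⊆ U := fun x hx => (hχF.1 hx).1
    have heq : χ ∩ U = χ := Set.inter_eq_self_of_subset_left hsubU
    have hle := hcut r hr χ hcutset
    rw [heq] at hle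
    have hne : χ.Nonempty := cutset_nonempty hG hcutset
    have h1 : 1 ≤ χ.ncard := (Set.ncard_pos (Set.toFinite χ)).mpr hne
    omega
end

section
/- Suppose a feasible solution (y, μ) satisfies: y encodes for each logical edge (s,t) a path from s to t in the physical graph (flow conservation constraints), μ^{st} ≤ 1 − (y^{st}_{iβjβ} + y^{st}_{jβiβ}) for each of k failed links, 0 ≤ μ^{st} ≤ 1, and μ satisfies the root-flow balance with supply 1/(|V_S|−1) at each non-root logical node and demand 1 at the root v_0. Then after the failure of the k given physical links, the logical graph restricted to edges (s,t) with μ^{st} > 0 connects every logical node to v_0, hence the residual logical graph is connected. -/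
open SimpleGraph Finset

/-- Theorem 6, sufficiency: a feasible MILP solution `(y, μ)` —
where `y` routes each logical edge as a flow from `m s` to `m t` in the
physical network, `μ` vanishes on logical edges using any of the `k` failed
physical links, and `μ` satisfies the root-flow balance with supply
`1/(|V_S|-1)` at non-root nodes and demand `1` at `v₀` — certifies that every
logical node reaches `v₀` through positive-`μ` logical edges, and hence that
the logical graph remains connected after the `k` physical link failures. -/
theorem milp_solution_certifies_survivability
    {VS VP : Type*} [Fintype VS] [Fintype VP] [DecidableEq VS] [DecidableEq VP]
    (GS : SimpleGraph VS) (hGS : GS.Connected)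
    (v₀ : VS) (hcard : 2 ≤ Fintype.card VS)
    (m : VS → VP)
    (k : ℕ) (failed : Fin k → VP × VP)
    (y : VS → VS → VP → VP → ℝ)
    (hybin : ∀ s t i j, y s t i j = 0 ∨ y s t i j = 1)
    -- path flow conservation for the route of each logical edge (s,t)
    (hflow : ∀ s t, GS.Adj s t → ∀ i : VP,
      (∑ j, y s t i j) - (∑ j, y s t j i) =
        if i = m s then 1 else if i = m t then -1 else 0)
    -- routes of the two orientations of a logical edge use reversed arcs
    (hsym : ∀ s t i j, GS.Adj s t → y s t i j = y t s j i)
    (μ : VS → VS → ℝ)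
    (hμ0 : ∀ s t, 0 ≤ μ s t) (hμ1 : ∀ s t, μ s t ≤ 1)
    (hμadj : ∀ s t, ¬ GS.Adj s t → μ s t = 0)
    -- μ vanishes on logical edges routed through a failed physical link
    (hμfail : ∀ s t, GS.Adj s t → ∀ β : Fin k,
      μ s t ≤ 1 - (y s t (failed β).1 (failed β).2 +
                    y s t (failed β).2 (failed β).1))
    -- root-flow balance on the logical nodes
    (hbal : ∀ s : VS,
      (∑ t, μ s t) - (∑ t, μ t s) =
        if s = v₀ then -1 else 1 / ((Fintype.card VS : ℝ) - 1)) :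
    (∀ s : VS,
      Relation.ReflTransGen (fun a b => GS.Adj a b ∧ 0 < μ a b) s v₀) ∧
    (GS.deleteEdges {e : Sym2 VS | ∃ s t, e = s(s, t) ∧ ∃ β : Fin k,
        0 < y s t (failed β).1 (failed β).2 +
            y s t (failed β).2 (failed β).1}).Connected := by
  classical
  have hn : (2:ℝ) ≤ (Fintype.card VS : ℝ) := by exact_mod_cast hcard
  -- Part 1: every node reaches v₀ via positive-μ edges
  have hreach : ∀ s : VS,
      Relation.ReflTransGen (fun a b => GS.Adj a b ∧ 0 < μ a b) s v₀ := by
    intro s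
    by_contra hnv
    set rel : VS → VS → Prop := fun a b => GS.Adj a b ∧ 0 < μ a b with hrel
    set S : Finset VS := univ.filter (fun b => Relation.ReflTransGen rel s b) with hS
    have hsS : s ∈ S := Finset.mem_filter.mpr ⟨Finset.mem_univ _, Relation.ReflTransGen.refl⟩
    have hv₀ : v₀ ∉ S := by simpa [hS] using hnv
    have hzero : ∀ a ∈ S, ∀ t ∈ Sᶜ, μ a t = 0 := by
      intro a ha t ht
      by_contra h
      have hpos : 0 < μ a t := lt_of_le_of_ne (hμ0 a t) (Ne.symm h)
      have hadj : GS.Adj a t := by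
        by_contra hna; exact h (hμadj a t hna)
      rw [Finset.mem_compl] at ht
      apply ht
      simp only [hS, mem_filter, mem_univ, true_and] at ha ⊢
      exact ha.tail ⟨hadj, hpos⟩
    have hsplit : ∀ f : VS → VS → ℝ, ∑ a ∈ S, ∑ t, f a t =
        (∑ a ∈ S, ∑ t ∈ S, f a t) + ∑ a ∈ S, ∑ t ∈ Sᶜ, f a t := by
      intro f
      rw [← Finset.sum_add_distrib]
      exact Finset.sum_congr rfl fun a _ => (Finset.sum_add_sum_compl S (f a)).symm
    have hsum : ∑ a ∈ S, ((∑ t, μ a t) - (∑ t, μ t a)) =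
        ∑ a ∈ S, (if a = v₀ then (-1:ℝ) else 1 / ((Fintype.card VS : ℝ) - 1)) :=
      Finset.sum_congr rfl fun a _ => hbal a
    have hLHS : ∑ a ∈ S, ((∑ t, μ a t) - (∑ t, μ t a)) =
        (∑ a ∈ S, ∑ t ∈ Sᶜ, μ a t) - ∑ a ∈ S, ∑ t ∈ Sᶜ, μ t a := by
      rw [Finset.sum_sub_distrib, hsplit (fun a t => μ a t),
        hsplit (fun a t => μ t a)]
      have : ∑ a ∈ S, ∑ t ∈ S, μ a t = ∑ a ∈ S, ∑ t ∈ S, μ t a :=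
        Finset.sum_comm
      linarith
    have hout : ∑ a ∈ S, ∑ t ∈ Sᶜ, μ a t = 0 :=
      Finset.sum_eq_zero fun a ha => Finset.sum_eq_zero fun t ht => hzero a ha t ht
    have hin : 0 ≤ ∑ a ∈ S, ∑ t ∈ Sᶜ, μ t a :=
      Finset.sum_nonneg fun a _ => Finset.sum_nonneg fun t _ => hμ0 t a
    have hRHS : ∑ a ∈ S, (if a = v₀ then (-1:ℝ) else 1 / ((Fintype.card VS : ℝ) - 1)) =
        (S.card : ℝ) * (1 / ((Fintype.card VS : ℝ) - 1)) := by
      rw [Finset.sum_congr rfl (fun a ha => if_neg (by rintro rfl; exact hv₀ ha)),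
        Finset.sum_const, nsmul_eq_mul]
    have hcardpos : (1:ℝ) ≤ (S.card : ℝ) := by
      have : 0 < S.card := Finset.card_pos.mpr ⟨s, hsS⟩
      exact_mod_cast this
    have hden : (0:ℝ) < 1 / ((Fintype.card VS : ℝ) - 1) := by
      apply div_pos one_pos; linarith
    have : (0:ℝ) < (S.card : ℝ) * (1 / ((Fintype.card VS : ℝ) - 1)) := by
      apply mul_pos (by linarith) hden
    rw [hLHS, hRHS, hout] at hsum
    linarith
  refine ⟨hreach, ?_⟩
  -- positive-μ edges survive the failure
  have hsurvive : ∀ a b : VS, GS.Adj a b → 0 < μ a b →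
      s(a, b) ∉ {e : Sym2 VS | ∃ s t, e = s(s, t) ∧ ∃ β : Fin k,
        0 < y s t (failed β).1 (failed β).2 + y s t (failed β).2 (failed β).1} := by
    rintro a b hadj hpos ⟨p, q, heq, β, hy⟩
    have hsum : 0 < y a b (failed β).1 (failed β).2 + y a b (failed β).2 (failed β).1 := by
      rcases Sym2.eq_iff.mp heq with ⟨rfl, rfl⟩ | ⟨rfl, rfl⟩
      · exact hy
      · rw [hsym b a _ _ hadj.symm, hsym b a _ _ hadj.symm] at hy
        linarith
    have h1 : 1 ≤ y a b (failed β).1 (failed β).2 + y a b (failed β).2 (failed β).1 := by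
      rcases hybin a b (failed β).1 (failed β).2 with h | h <;>
        rcases hybin a b (failed β).2 (failed β).1 with h' | h' <;>
        rw [h, h'] at hsum ⊢ <;> linarith
    have := hμfail a b hadj β
    linarith
  -- connectivity of the residual graph
  set D : Set (Sym2 VS) := {e : Sym2 VS | ∃ s t, e = s(s, t) ∧ ∃ β : Fin k,
      0 < y s t (failed β).1 (failed β).2 + y s t (failed β).2 (failed β).1} with hD
  have key : ∀ a b : VS, Relation.ReflTransGen (fun a b => GS.Adj a b ∧ 0 < μ a b) a b →
      (GS.deleteEdges D).Reachable a b := by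
    intro a b h
    induction h with
    | refl => exact SimpleGraph.Reachable.refl _
    | tail _ hbc ih =>
      refine ih.trans (SimpleGraph.Adj.reachable ?_)
      rw [SimpleGraph.deleteEdges_adj]
      exact ⟨hbc.1, hsurvive _ _ hbc.1 hbc.2⟩
  rw [SimpleGraph.connected_iff]
  refine ⟨fun a b => (key a v₀ (hreach a)).trans (key b v₀ (hreach b)).symm, ?_⟩
  have : 0 < Fintype.card VS := by omega
  exact Fintype.card_pos_iff.mp this
end
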